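/- arXiv:2101.10228 — 2 statements merged into one kernel-verified Lean document; each statement's English description precedes it below -/
import Mathlib

section
/- Let R > 0 and let 0 ≤ γ ≤ β ≤ π. Set A = (−R, 0), B = P_R(β), C = P_R(γ), D = (R, 0), so that ABCD is a quadrilateral inscribed in the upper semicircle with the side AD as diameter. Writing a = dist A B, b = dist B C, c = dist C D, and d = dist A D = 2R, the sides satisfy d² = a² + b² + c² + 2abc/d. -/
noncomputable def P (R θ : ℝ) : EuclideanSpace ℝ (Fin 2) :=
  (WithLp.equiv 2 (Fin 2 → ℝ)).symm ![R * Real.cos θ, R * Real.sin θ]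

/-! The chords `a`, `b`, `c` are `d sin x`, `d sin y`, `d sin z` for the half-arcs
`x = (π - β)/2`, `y = (β - γ)/2`, `z = γ/2`, which add up to `π/2`; the relation is then the
trigonometric identity `sin² x + sin² y + sin² z + 2 sin x sin y sin z = 1` for `x + y + z = π/2`. -/

open Real

lemma dist_P (R θ₁ θ₂ : ℝ) :
    dist (P R θ₁) (P R θ₂) = 2 * |R| * |sin ((θ₁ - θ₂) / 2)| := by
  have half_angle : sin ((θ₁ - θ₂) / 2) ^ 2 = (1 - cos (θ₁ - θ₂)) / 2 := by
    rw [sin_sq_eq_half_sub, show 2 * ((θ₁ - θ₂) / 2) = θ₁ - θ₂ by ring]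
    ring
  have hsq : dist (P R θ₁) (P R θ₂) ^ 2 = (2 * |R| * |sin ((θ₁ - θ₂) / 2)|) ^ 2 := by
    simp only [EuclideanSpace.dist_eq, P, WithLp.equiv_symm_apply,
      Fin.sum_univ_two, Matrix.cons_val_zero, Matrix.cons_val_one,
      Real.dist_eq, sq_abs, mul_pow, half_angle]
    rw [sq_sqrt (by positivity), cos_sub]
    linear_combination R ^ 2 * sin_sq_add_cos_sq θ₁ + R ^ 2 * sin_sq_add_cos_sq θ₂
  exact (pow_left_inj₀ dist_nonneg (by positivity) two_ne_zero).mp hsq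

lemma dist_P_of_le {R θ₁ θ₂ : ℝ} (hR : 0 ≤ R) (h₂₁ : θ₂ ≤ θ₁) (h₁₂ : θ₁ ≤ θ₂ + 2 * π) :
    dist (P R θ₁) (P R θ₂) = 2 * R * sin ((θ₁ - θ₂) / 2) := by
  rw [dist_P, abs_of_nonneg hR,
    abs_of_nonneg (sin_nonneg_of_nonneg_of_le_pi (by linarith) (by linarith))]

lemma sin_sq_add_sin_sq_add_sin_sq_add_two_mul_sin_mul_sin_mul_sin {x y z : ℝ}
    (h : x + y + z = π / 2) :
    sin x ^ 2 + sin y ^ 2 + sin z ^ 2 + 2 * sin x * sin y * sin z = 1 := by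
  rw [show z = π / 2 - (x + y) by linarith, sin_pi_div_two_sub, cos_add]
  linear_combination (1 - sin x ^ 2) * sin_sq_add_cos_sq y + cos y ^ 2 * sin_sq_add_cos_sq x

lemma sq_eq_of_add_eq_pi_div_two (d : ℝ) {x y z : ℝ} (h : x + y + z = π / 2) :
    d ^ 2 = (d * sin x) ^ 2 + (d * sin y) ^ 2 + (d * sin z) ^ 2
      + 2 * (d * sin x) * (d * sin y) * (d * sin z) / d := by
  rcases eq_or_ne d 0 with rfl | hd
  · simp
  field_simp
  linear_combination -sin_sq_add_sin_sq_add_sin_sq_add_two_mul_sin_mul_sin_mul_sin h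

theorem quadrilateral_pythagoras (R β γ : ℝ) (hR : 0 < R)
    (hγ : 0 ≤ γ) (hβγ : γ ≤ β) (hβ : β ≤ Real.pi)
    (A B C D : EuclideanSpace ℝ (Fin 2))
    (hA : A = P R Real.pi) (hB : B = P R β) (hC : C = P R γ) (hD : D = P R 0)
    (a b c d : ℝ)
    (ha : a = dist A B) (hb : b = dist B C) (hc : c = dist C D) (hd : d = dist A D) :
    d = 2 * R ∧ d ^ 2 = a ^ 2 + b ^ 2 + c ^ 2 + 2 * a * b * c / d := by
  subst_vars
  have hπ := pi_pos
  have diameter : dist (P R π) (P R 0) = 2 * R := by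
    rw [dist_P_of_le hR.le hπ.le (by linarith)]
    simp
  refine ⟨diameter, ?_⟩
  rw [diameter, dist_P_of_le hR.le hβ (by linarith), dist_P_of_le hR.le hβγ (by linarith),
    dist_P_of_le hR.le hγ (by linarith)]
  exact sq_eq_of_add_eq_pi_div_two (2 * R) (by ring)
end

section
/- There exist points A, B, C, D in the Euclidean plane with dist A D = 4√2, dist A B = √2, dist B C = 3 + √5, dist C D = 3 − √5, such that: (i) the inner product ⟪B − A, D − A⟫ = 0 (the angle at A is 90°, with B ≠ A and D ≠ A); (ii) AD is the longest side, i.e. dist A B ≤ dist A D, dist B C ≤ dist A D, and dist C D ≤ dist A D; (iii) writing a = dist A B, b = dist B C, c = dist C D, d = dist A D, the relation d² = a² + b² + c² + 2abc/d holds; and yet (iv) B does not lie on the circle with diameter AD, i.e. dist B (midpoint A D) ≠ (dist A D)/2. Hence the relation d² = a² + b² + c² + 2abc/d for a quadrilateral with longest side d does not imply that the quadrilateral is inscribed in the semicircle with that side as diameter. -/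
/-!
With `a = √2`, `d = 4√2` and `b, c = 3 ± √5` we have `bc = 4`, so
`a² + b² + c² + 2abc/d = 2 + 28 + 2 = 32 = d²`. Put `A` at the origin and `B`, `D` on the two
axes, so the angle at `A` is right. Then `BD = √34` and `b - c = 2√5 ≤ √34 ≤ 6 = b + c`, so
the circles of radius `b` about `B` and `c` about `D` meet (by connectedness of a circle and the
intermediate value theorem, in any real normed space of dimension at least two). Any meeting
point is a valid `C`, yet `B` is at distance `√10 ≠ 2√2` from the midpoint of `AD`.
-/

open AffineMap Metric

theorem exists_dist_eq_and_dist_eq {E : Type*} [NormedAddCommGroup E] [NormedSpace ℝ E]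
    (hE : 1 < Module.rank ℝ E) {B D : E} {r s : ℝ} (hBD : B ≠ D)
    (hs₁ : |dist B D - r| ≤ s) (hs₂ : s ≤ dist B D + r) :
    ∃ C, dist B C = r ∧ dist C D = s := by
  have hℓ : 0 < dist B D := dist_pos.2 hBD
  have hr : 0 ≤ r := by
    by_contra! hr
    linarith [le_abs_self (dist B D - r)]
  have hmem (t : ℝ) (ht : |t| = r / dist B D) : lineMap B D t ∈ sphere B r := by
    rw [mem_sphere', dist_left_lineMap, Real.norm_eq_abs, ht, div_mul_cancel₀ _ hℓ.ne']
  have hnear : dist (lineMap B D (r / dist B D)) D = |dist B D - r| := by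
    rw [dist_lineMap_right, Real.norm_eq_abs, ← abs_of_pos hℓ, ← abs_mul, abs_of_pos hℓ]
    congr 1; field_simp
  have hfar : dist (lineMap B D (-(r / dist B D))) D = dist B D + r := by
    rw [dist_lineMap_right, sub_neg_eq_add, Real.norm_eq_abs, abs_of_nonneg (by positivity)]
    field_simp
  obtain ⟨C, hC, hCD⟩ := (isPreconnected_sphere hE B r).intermediate_value
    (hmem (r / dist B D) (abs_of_nonneg (by positivity)))
    (hmem (-(r / dist B D)) (by rw [abs_neg, abs_of_nonneg (by positivity)]))
    (f := fun x => dist x D) (continuous_id.dist continuous_const).continuousOn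
    (show s ∈ Set.Icc _ _ by rw [hnear, hfar]; exact ⟨hs₁, hs₂⟩)
  exact ⟨C, mem_sphere'.1 hC, hCD⟩

theorem dist_vec2_eq_of_sq_eq {x y x' y' r : ℝ} (h : (x - x') ^ 2 + (y - y') ^ 2 = r ^ 2)
    (hr : 0 ≤ r) : dist !₂[x, y] !₂[x', y'] = r := by
  rw [EuclideanSpace.dist_eq, Fin.sum_univ_two]
  simp [Real.dist_eq, sq_abs, h, hr]

theorem midpoint_vec2 (x y x' y' : ℝ) :
    midpoint ℝ !₂[x, y] !₂[x', y'] = !₂[(x + x') / 2, (y + y') / 2] := by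
  ext i; fin_cases i <;> simp [midpoint_eq_smul_add] <;> ring

theorem sqrt_five_lt_three : √5 < 3 := by
  rw [Real.sqrt_lt' (by norm_num)]; norm_num

theorem three_add_sqrt_five_le_four_mul_sqrt_two : 3 + √5 ≤ 4 * √2 := by
  have h2 : √2 ^ 2 = 2 := Real.sq_sqrt (by norm_num)
  have h5 : √5 ^ 2 = 5 := Real.sq_sqrt (by norm_num)
  nlinarith [sqrt_five_lt_three, Real.sqrt_nonneg 2, Real.sqrt_nonneg 5]

theorem four_mul_sqrt_two_sq_eq :
    (4 * √2) ^ 2 =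
      √2 ^ 2 + (3 + √5) ^ 2 + (3 - √5) ^ 2 + 2 * √2 * (3 + √5) * (3 - √5) / (4 * √2) := by
  have h2 : √2 ^ 2 = 2 := Real.sq_sqrt (by norm_num)
  have h5 : √5 ^ 2 = 5 := Real.sq_sqrt (by norm_num)
  have hs2 : 0 < √2 := Real.sqrt_pos.2 (by norm_num)
  have hbc : (3 + √5) * (3 - √5) = 4 := by linear_combination -h5
  rw [mul_assoc (2 * √2), hbc, show 2 * √2 * 4 / (4 * √2) = 2 by field_simp]
  linear_combination 15 * h2 - 2 * h5

theorem exists_dist_eq_three_add_sqrt_five_and_dist_eq_three_sub_sqrt_five :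
    ∃ C : EuclideanSpace ℝ (Fin 2),
      dist !₂[0, √2] C = 3 + √5 ∧ dist C !₂[4 * √2, 0] = 3 - √5 := by
  have h2 : √2 ^ 2 = 2 := Real.sq_sqrt (by norm_num)
  have h5 : √5 ^ 2 = 5 := Real.sq_sqrt (by norm_num)
  have h34 : √34 ^ 2 = 34 := Real.sq_sqrt (by norm_num)
  have hBD : dist !₂[0, √2] !₂[4 * √2, 0] = √34 :=
    dist_vec2_eq_of_sq_eq (by linear_combination 17 * h2 - h34) (Real.sqrt_nonneg _)
  have hsqrt34 : 0 < √34 := Real.sqrt_pos.2 (by norm_num)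
  refine exists_dist_eq_and_dist_eq
    (by rw [← Module.finrank_eq_rank, finrank_euclideanSpace_fin]; norm_num)
    (dist_pos.1 (hBD ▸ hsqrt34)) ?_ (by rw [hBD]; linarith [Real.sqrt_nonneg 5])
  rw [hBD, abs_sub_le_iff]
  constructor <;> nlinarith [Real.sqrt_nonneg 5]

theorem quadrilateral_reciprocal_fails :
    ∃ A B C D : EuclideanSpace ℝ (Fin 2),
      dist A D = 4 * Real.sqrt 2 ∧
      dist A B = Real.sqrt 2 ∧
      dist B C = 3 + Real.sqrt 5 ∧
      dist C D = 3 - Real.sqrt 5 ∧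
      B ≠ A ∧ D ≠ A ∧
      (inner ℝ (B - A) (D - A) : ℝ) = 0 ∧
      dist A B ≤ dist A D ∧ dist B C ≤ dist A D ∧ dist C D ≤ dist A D ∧
      (dist A D) ^ 2 =
        (dist A B) ^ 2 + (dist B C) ^ 2 + (dist C D) ^ 2 +
          2 * (dist A B) * (dist B C) * (dist C D) / dist A D ∧
      dist B (midpoint ℝ A D) ≠ dist A D / 2 := by
  obtain ⟨C, hBC, hCD⟩ := exists_dist_eq_three_add_sqrt_five_and_dist_eq_three_sub_sqrt_five
  refine ⟨!₂[0, 0], !₂[0, √2], C, !₂[4 * √2, 0], ?_⟩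
  have h2 : √2 ^ 2 = 2 := Real.sq_sqrt (by norm_num)
  have h10 : √10 ^ 2 = 10 := Real.sq_sqrt (by norm_num)
  have hs2 : 0 < √2 := Real.sqrt_pos.2 (by norm_num)
  have hAD : dist !₂[0, 0] !₂[4 * √2, 0] = 4 * √2 :=
    dist_vec2_eq_of_sq_eq (by ring) (by positivity)
  have hAB : dist !₂[0, 0] !₂[0, √2] = √2 := dist_vec2_eq_of_sq_eq (by ring) hs2.le
  have hBM : dist !₂[0, √2] (midpoint ℝ !₂[0, 0] !₂[4 * √2, 0]) = √10 := by
    rw [midpoint_vec2]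
    exact dist_vec2_eq_of_sq_eq (by linear_combination 5 * h2 - h10) (Real.sqrt_nonneg _)
  rw [hAD, hAB, hBC, hCD, hBM]
  refine ⟨rfl, rfl, rfl, rfl, ?_, ?_, by simp [PiLp.inner_apply], by linarith,
    three_add_sqrt_five_le_four_mul_sqrt_two,
    by linarith [three_add_sqrt_five_le_four_mul_sqrt_two, Real.sqrt_nonneg 5],
    four_mul_sqrt_two_sq_eq, fun h => ?_⟩
  · rw [ne_comm, ← dist_pos, hAB]; exact hs2
  · rw [ne_comm, ← dist_pos, hAD]; linarith
  · nlinarith [congrArg (· ^ 2) h]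
end
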